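/- For all real numbers t and s with t² + s² ≠ 0, the Lie algebra 𝔫'_{t,s} is isomorphic, as a real Lie algebra, to the direct sum 𝔥₃ ⊕ ℝ³, where 𝔥₃ is the 3-dimensional real Heisenberg Lie algebra of strictly upper triangular 3×3 real matrices and ℝ³ is a 3-dimensional abelian Lie algebra. -/

import Mathlib

/-! Write `eⁱ` for the coordinate forms of the basis `e` (indexed from `0`, so `e⁵` is the paper's
`e⁶`) and put `α = t e⁰ + s e²`, `β = t e¹ + s e³`. The structure equation `de⁵ = α ∧ β` says
`⁅u, v⁆ = (α ∧ β)(u, v) • (-e 5)`. As `t² + s² ≠ 0`, the vectors `x = (t e 0 + s e 2) / (t² + s²)`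
and `y = (t e 1 + s e 3) / (t² + s²)` are dual to `α, β`, so `x, y, -e 5` span a Heisenberg algebra,
while `s e 0 - t e 2`, `s e 1 - t e 3`, `e 4` lie in `ker α ∩ ker β` and are therefore central.
Together these six vectors form a basis of `L`. -/

/-- The product of two Lie rings, with componentwise bracket. -/
instance prodLieRing {L M : Type*} [LieRing L] [LieRing M] : LieRing (L × M) where
  bracket x y := (⁅x.1, y.1⁆, ⁅x.2, y.2⁆)
  add_lie x y z := Prod.ext (add_lie x.1 y.1 z.1) (add_lie x.2 y.2 z.2)
  lie_add x y z := Prod.ext (lie_add x.1 y.1 z.1) (lie_add x.2 y.2 z.2)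
  lie_self x := Prod.ext (lie_self x.1) (lie_self x.2)
  leibniz_lie x y z := Prod.ext (leibniz_lie x.1 y.1 z.1) (leibniz_lie x.2 y.2 z.2)

/-- The product of two real Lie algebras, with componentwise structure. -/
instance prodLieAlgebra {L M : Type*} [LieRing L] [LieRing M]
    [LieAlgebra ℝ L] [LieAlgebra ℝ M] : LieAlgebra ℝ (L × M) where
  lie_smul t x y := Prod.ext (lie_smul t x.1 y.1) (lie_smul t x.2 y.2)

attribute [local instance 100] LieRing.ofAssociativeRing

/-- The 3-dimensional real Heisenberg Lie algebra: strictly upper triangular `3 × 3` real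
matrices, with the commutator bracket. -/
def realHeisenberg : LieSubalgebra ℝ (Matrix (Fin 3) (Fin 3) ℝ) where
  carrier := {M | ∀ i j : Fin 3, j ≤ i → M i j = 0}
  add_mem' := fun ha hb i j hij => by
    simp only [Matrix.add_apply, ha i j hij, hb i j hij, add_zero]
  zero_mem' := fun i j _ => rfl
  smul_mem' := fun c M hM i j hij => by
    simp only [Matrix.smul_apply, hM i j hij, smul_zero]
  lie_mem' := by
    intro x y hx hy i j hij
    rw [Ring.lie_def]
    simp only [Matrix.sub_apply, Matrix.mul_apply]
    rw [Finset.sum_eq_zero, Finset.sum_eq_zero, sub_zero]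
    · intro k _
      rcases le_or_gt k i with h | h
      · rw [hy i k h, zero_mul]
      · rw [hx k j (hij.trans h.le), mul_zero]
    · intro k _
      rcases le_or_gt k i with h | h
      · rw [hx i k h, zero_mul]
      · rw [hy k j (hij.trans h.le), mul_zero]

namespace realHeisenberg

def mk (a b c : ℝ) : realHeisenberg :=
  ⟨!![0, a, c; 0, 0, b; 0, 0, 0], by intro i j hij; fin_cases i <;> fin_cases j <;> simp_all⟩

theorem coe_mk (a b c : ℝ) :
    (mk a b c : Matrix (Fin 3) (Fin 3) ℝ) = !![0, a, c; 0, 0, b; 0, 0, 0] :=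
  rfl

theorem eq_mk (p : realHeisenberg) : p = mk (p.1 0 1) (p.1 1 2) (p.1 0 2) := by
  obtain ⟨p, hp⟩ := p
  ext i j
  fin_cases i <;> fin_cases j <;> first | rfl | exact hp _ _ (by decide)

def coords : realHeisenberg ≃ₗ[ℝ] (Fin 3 → ℝ) where
  toFun p := ![p.1 0 1, p.1 1 2, p.1 0 2]
  invFun v := mk (v 0) (v 1) (v 2)
  map_add' p q := by ext i; fin_cases i <;> rfl
  map_smul' r p := by ext i; fin_cases i <;> rfl
  left_inv p := (eq_mk p).symm
  right_inv v := by ext i; fin_cases i <;> rfl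

theorem lie_eq_smul_mk (p q : realHeisenberg) :
    ⁅p, q⁆ = (p.1 0 1 * q.1 1 2 - p.1 1 2 * q.1 0 1) • mk 0 0 1 := by
  rw [eq_mk p, eq_mk q]
  ext i j
  fin_cases i <;> fin_cases j <;> simp [coe_mk, Ring.lie_def, mul_comm]

instance : FiniteDimensional ℝ realHeisenberg := coords.symm.finiteDimensional

theorem finrank_eq : Module.finrank ℝ realHeisenberg = 3 := by
  simp [coords.finrank_eq]

end realHeisenberg

namespace LinearMap

variable {R L M : Type*} [CommRing R] [AddCommGroup L] [Module R L] [AddCommGroup M] [Module R M]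

def wedgeSmul (α β : L →ₗ[R] R) (z : M) : L →ₗ[R] L →ₗ[R] M :=
  α.smulRight (β.smulRight z) - β.smulRight (α.smulRight z)

theorem wedgeSmul_apply (α β : L →ₗ[R] R) (z : M) (u v : L) :
    α.wedgeSmul β z u v = (α u * β v - β u * α v) • z := by
  simp [wedgeSmul, sub_smul, mul_smul]

theorem isAlt_wedgeSmul (α β : L →ₗ[R] R) (z : M) : (α.wedgeSmul β z).IsAlt := fun u => by
  rw [wedgeSmul_apply, mul_comm, sub_self, zero_smul]

end LinearMap

theorem Module.Basis.lie_eq_of_isAlt {R L ι : Type*} [CommRing R] [LieRing L] [LieAlgebra R L]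
    [LinearOrder ι] (b : Module.Basis ι R L) {B : L →ₗ[R] L →ₗ[R] L} (hB : B.IsAlt)
    (h : ∀ i j, i < j → ⁅b i, b j⁆ = B (b i) (b j)) (u v : L) : ⁅u, v⁆ = B u v := by
  have hbracket : LinearMap.mk₂ R (⁅·, ·⁆) add_lie smul_lie lie_add lie_smul = B := by
    refine LinearMap.ext_basis b b fun i j => ?_
    rcases lt_trichotomy i j with hij | rfl | hij
    · exact h i j hij
    · rw [LinearMap.mk₂_apply, lie_self, hB.self_eq_zero]
    · rw [LinearMap.mk₂_apply, ← lie_skew, h j i hij, hB.neg]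
  exact LinearMap.congr_fun₂ hbracket u v

theorem realHeisenberg.map_lie_of_lie_eq_wedgeSmul {L V : Type*} [LieRing L] [LieAlgebra ℝ L]
    [LieRing V] [LieAlgebra ℝ V] [IsLieAbelian V] {α β : L →ₗ[ℝ] ℝ} {z : L}
    (hL : ∀ u v : L, ⁅u, v⁆ = α.wedgeSmul β z u v) (ψ : realHeisenberg × V →ₗ[ℝ] L)
    (hα : ∀ w, α (ψ w) = w.1.1 0 1) (hβ : ∀ w, β (ψ w) = w.1.1 1 2)
    (hz : ψ (mk 0 0 1, 0) = z) (w w' : realHeisenberg × V) : ψ ⁅w, w'⁆ = ⁅ψ w, ψ w'⁆ := by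
  have hw : ⁅w, w'⁆ = (w.1.1 0 1 * w'.1.1 1 2 - w.1.1 1 2 * w'.1.1 0 1) • (mk 0 0 1, (0 : V)) :=
    Prod.ext (lie_eq_smul_mk w.1 w'.1) (by simp [trivial_lie_zero])
  rw [hw, map_smul, hz, hL, LinearMap.wedgeSmul_apply, hα, hα, hβ, hβ]

namespace Nts

variable {L : Type*} [LieRing L] [LieAlgebra ℝ L] (t s : ℝ) (e : Module.Basis (Fin 6) ℝ L)

noncomputable def alpha : L →ₗ[ℝ] ℝ := t • e.coord 0 + s • e.coord 2

noncomputable def beta : L →ₗ[ℝ] ℝ := t • e.coord 1 + s • e.coord 3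

noncomputable def heisenbergProdMap : realHeisenberg × (Fin 3 → ℝ) →ₗ[ℝ] L :=
  (Fintype.linearCombination ℝ ![(t ^ 2 + s ^ 2)⁻¹ • (t • e 0 + s • e 2),
      (t ^ 2 + s ^ 2)⁻¹ • (t • e 1 + s • e 3), -e 5] ∘ₗ realHeisenberg.coords.toLinearMap).coprod
    (Fintype.linearCombination ℝ ![s • e 0 - t • e 2, s • e 1 - t • e 3, e 4])

theorem heisenbergProdMap_apply (w : realHeisenberg × (Fin 3 → ℝ)) :
    heisenbergProdMap t s e w =
      w.1.1 0 1 • (t ^ 2 + s ^ 2)⁻¹ • (t • e 0 + s • e 2)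
        + w.1.1 1 2 • (t ^ 2 + s ^ 2)⁻¹ • (t • e 1 + s • e 3) + w.1.1 0 2 • -e 5
        + (w.2 0 • (s • e 0 - t • e 2) + w.2 1 • (s • e 1 - t • e 3) + w.2 2 • e 4) := by
  simp [heisenbergProdMap, Fintype.linearCombination_apply, Fin.sum_univ_three,
    realHeisenberg.coords]

variable {t s}

theorem alpha_heisenbergProdMap (hc : t ^ 2 + s ^ 2 ≠ 0) (w : realHeisenberg × (Fin 3 → ℝ)) :
    alpha t s e (heisenbergProdMap t s e w) = w.1.1 0 1 := by
  simp only [heisenbergProdMap_apply, alpha, map_add, map_smul, map_neg, map_sub,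
    LinearMap.add_apply, LinearMap.smul_apply, Module.Basis.coord_apply, Module.Basis.repr_self,
    Finsupp.single_apply, smul_eq_mul]
  grind

theorem beta_heisenbergProdMap (hc : t ^ 2 + s ^ 2 ≠ 0) (w : realHeisenberg × (Fin 3 → ℝ)) :
    beta t s e (heisenbergProdMap t s e w) = w.1.1 1 2 := by
  simp only [heisenbergProdMap_apply, beta, map_add, map_smul, map_neg, map_sub,
    LinearMap.add_apply, LinearMap.smul_apply, Module.Basis.coord_apply, Module.Basis.repr_self,
    Finsupp.single_apply, smul_eq_mul]
  grind

theorem heisenbergProdMap_mk : heisenbergProdMap t s e (realHeisenberg.mk 0 0 1, 0) = -e 5 := by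
  simp [heisenbergProdMap_apply, realHeisenberg.coe_mk]

theorem heisenbergProdMap_surjective (hc : t ^ 2 + s ^ 2 ≠ 0) :
    Function.Surjective (heisenbergProdMap t s e) := by
  have hbasis : ∀ i, e i ∈ LinearMap.range (heisenbergProdMap t s e) := fun i => by
    let c := t ^ 2 + s ^ 2
    refine ⟨![(realHeisenberg.mk t 0 0, ![s / c, 0, 0]), (realHeisenberg.mk 0 t 0, ![0, s / c, 0]),
      (realHeisenberg.mk s 0 0, ![-t / c, 0, 0]), (realHeisenberg.mk 0 s 0, ![0, -t / c, 0]),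
      (0, ![0, 0, 1]), (realHeisenberg.mk 0 0 (-1), 0)] i, ?_⟩
    fin_cases i <;>
      simp only [Fin.zero_eta, Fin.mk_one, Fin.reduceFinMk, Matrix.cons_val, Matrix.cons_val_zero,
        Matrix.cons_val_one, Matrix.of_apply, Matrix.zero_apply, Pi.zero_apply,
        ZeroMemClass.coe_zero, heisenbergProdMap_apply, realHeisenberg.coe_mk] <;>
      match_scalars <;> grind
  rw [← LinearMap.range_eq_top, eq_top_iff, ← e.span_eq, Submodule.span_le]
  exact Set.range_subset_iff.mpr hbasis

theorem heisenbergProdMap_bijective (hc : t ^ 2 + s ^ 2 ≠ 0) :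
    Function.Bijective (heisenbergProdMap t s e) := by
  have : FiniteDimensional ℝ L := e.finiteDimensional_of_finite
  have hdim : Module.finrank ℝ (realHeisenberg × (Fin 3 → ℝ)) = Module.finrank ℝ L := by
    simp [Module.finrank_prod, realHeisenberg.finrank_eq, Module.finrank_eq_card_basis e]
  have hsurj := heisenbergProdMap_surjective e hc
  exact ⟨(LinearMap.injective_iff_surjective_of_finrank_eq_finrank hdim).mpr hsurj, hsurj⟩

end Nts

theorem nts'_iso_heisenberg_sum_abelian (t s : ℝ) (hts : t ^ 2 + s ^ 2 ≠ 0)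
    (L : Type) [LieRing L] [LieAlgebra ℝ L] (e : Module.Basis (Fin 6) ℝ L)
    (h01 : ⁅e 0, e 1⁆ = (-(t^2)) • e 5) (h03 : ⁅e 0, e 3⁆ = (-(t*s)) • e 5)
    (h12 : ⁅e 1, e 2⁆ = (t*s) • e 5) (h23 : ⁅e 2, e 3⁆ = (-(s^2)) • e 5)
    (h02 : ⁅e 0, e 2⁆ = 0) (h13 : ⁅e 1, e 3⁆ = 0)
    (h04 : ⁅e 0, e 4⁆ = 0) (h05 : ⁅e 0, e 5⁆ = 0)
    (h14 : ⁅e 1, e 4⁆ = 0) (h15 : ⁅e 1, e 5⁆ = 0)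
    (h24 : ⁅e 2, e 4⁆ = 0) (h25 : ⁅e 2, e 5⁆ = 0)
    (h34 : ⁅e 3, e 4⁆ = 0) (h35 : ⁅e 3, e 5⁆ = 0)
    (h45 : ⁅e 4, e 5⁆ = 0) :
    Nonempty (L ≃ₗ⁅ℝ⁆ (realHeisenberg × (Fin 3 → ℝ))) := by
  have hL : ∀ u v : L, ⁅u, v⁆ = (Nts.alpha t s e).wedgeSmul (Nts.beta t s e) (-e 5) u v := by
    refine e.lie_eq_of_isAlt (LinearMap.isAlt_wedgeSmul _ _ _) fun i j hij => ?_
    fin_cases i <;> fin_cases j <;> try exact absurd hij (by decide)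
    all_goals
      simp [LinearMap.wedgeSmul_apply, Nts.alpha, Nts.beta, sq, *]
  have : IsLieAbelian (Fin 3 → ℝ) := isMulCommutative_iff_isLieAbelian.mp inferInstance
  let ψ : realHeisenberg × (Fin 3 → ℝ) →ₗ⁅ℝ⁆ L :=
    { Nts.heisenbergProdMap t s e with
      map_lie' := realHeisenberg.map_lie_of_lie_eq_wedgeSmul hL _
        (Nts.alpha_heisenbergProdMap e hts) (Nts.beta_heisenbergProdMap e hts)
        (Nts.heisenbergProdMap_mk e) _ _ }
  exact ⟨(LieEquiv.ofBijective ψ (Nts.heisenbergProdMap_bijective e hts)).symm⟩
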